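/- Tightness is hereditary: if (eₙ) is a tight basis of a Banach space X, then every infinite-dimensional closed subspace of X contains a basic sequence that is tight. In particular, a tight space contains no minimal subspace. -/

import Mathlib

open scoped BigOperators Classical

noncomputable section

section Prelude

variable {X : Type*} [NormedAddCommGroup X] [NormedSpace ℝ X]

/-- The vector with finitely supported coefficients `c` with respect to the sequence `e`. -/
def vecOf (e : ℕ → X) (c : ℕ →₀ ℝ) : X := c.sum fun n a => a • e n

/-- `c < d` : the supports of `c` and `d` are successive. -/
def FsuppLt (c d : ℕ →₀ ℝ) : Prop := ∀ a ∈ c.support, ∀ b ∈ d.support, a < b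

/-- The Gowers–Maurey function `f(n) = log₂(n+1)`. -/
def flog (n : ℕ) : ℝ := Real.logb 2 ((n : ℝ) + 1)

/-- Support of a functional with respect to the basis `e` (via biorthogonal functionals). -/
def fsupp (e : ℕ → X) (f : X →L[ℝ] ℝ) : Set ℕ := {n | f (e n) ≠ 0}

/-- Bimonotonicity of the basis `e`, expressed on finitely supported vectors:
projections onto intervals are contractive. -/
def Bimonotone (e : ℕ → X) : Prop :=
  ∀ (c : ℕ →₀ ℝ) (a b : ℕ), ‖vecOf e (c.filter fun n => n ∈ Finset.Icc a b)‖ ≤ ‖vecOf e c‖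

/-- Lower `f`-estimate for a general function `f`. -/
def LowerEst (e : ℕ → X) (f : ℝ → ℝ) : Prop :=
  ∀ (n : ℕ) (c : Fin n → ℕ →₀ ℝ), (∀ i j : Fin n, i < j → FsuppLt (c i) (c j)) →
    (1 / f (n : ℝ)) * ∑ i, ‖vecOf e (c i)‖ ≤ ‖∑ i, vecOf e (c i)‖

/-- Lower `f`-estimate with `f(n) = log₂(n+1)`. -/
def LowerFEst (e : ℕ → X) : Prop :=
  ∀ (n : ℕ) (c : Fin n → ℕ →₀ ℝ), (∀ i j : Fin n, i < j → FsuppLt (c i) (c j)) →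
    (1 / flog n) * ∑ i, ‖vecOf e (c i)‖ ≤ ‖∑ i, vecOf e (c i)‖

/-- `Y` embeds isomorphically into `Z` (linear isomorphism onto its image). -/
def Embeds (Y Z : Type*) [NormedAddCommGroup Y] [NormedSpace ℝ Y]
    [NormedAddCommGroup Z] [NormedSpace ℝ Z] : Prop :=
  ∃ T : Y →L[ℝ] Z, ∃ c : ℝ, 0 < c ∧ ∀ y, c * ‖y‖ ≤ ‖T y‖

/-- `Y` embeds into `Z` with constant `K` (i.e. `‖T‖ ⬝ ‖T⁻¹‖ ≤ K` after normalisation). -/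
def EmbedsWithConst (K : ℝ) (Y Z : Type*) [NormedAddCommGroup Y] [NormedSpace ℝ Y]
    [NormedAddCommGroup Z] [NormedSpace ℝ Z] : Prop :=
  ∃ T : Y →L[ℝ] Z, ∀ y, ‖y‖ ≤ ‖T y‖ ∧ ‖T y‖ ≤ K * ‖y‖

/-- The closed span `[eₙ : n ∉ S]`. -/
def spanCompl (e : ℕ → X) (S : Set ℕ) : Submodule ℝ X :=
  (Submodule.span ℝ (e '' Sᶜ)).topologicalClosure

/-- `Y` is tight in the basic sequence `e`. -/
def TightIn (e : ℕ → X) (Y : Type*) [NormedAddCommGroup Y] [NormedSpace ℝ Y] : Prop :=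
  ∃ I : ℕ → Finset ℕ, (∀ i j : ℕ, i < j → ∀ a ∈ I i, ∀ b ∈ I j, a < b) ∧
    ∀ A : Set ℕ, A.Infinite → ¬ Embeds Y ↥(spanCompl e (⋃ i ∈ A, (I i : Set ℕ)))

/-- The basis `e` is tight: every infinite-dimensional Banach space is tight in it. -/
def TightBasis (e : ℕ → X) : Prop :=
  ∀ (Y : Type) [NormedAddCommGroup Y] [NormedSpace ℝ Y] [CompleteSpace Y],
    ¬ FiniteDimensional ℝ Y → TightIn e Y

end Prelude

/-!
Mazur's lemma produces, inside any infinite-dimensional subspace `Z`, a normalised basic sequence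
`(xₙ)` with basis constant `2` whose terms lie ever deeper in the tail spans of `(eₙ)` and hence
are small perturbations of successive blocks `vecOf e (cₙ)` of the basis. The biorthogonal
functionals of `(xₙ)` turn this into an operator `T : Z → X` with `‖T y‖ ≥ ‖y‖ / 2` and
`T xₙ = vecOf e (cₙ)`. Given the intervals `Iᵢ` witnessing that `Y` is tight in `(eₙ)`, the sets of
`n` whose block `cₙ` meets `Iᵢ` are finite, and a subsequence of them is successive; removing a
union of these from `(xₙ)` makes `T` land in `[eₙ : n ∉ ⋃ Iᵢ]`, so `Y` is tight in `(xₙ)` too.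
A minimal `Z` would embed into `[xₙ : n ∉ ⋃_{i ∈ A} Iᵢ]` for a suitable infinite `A`, contradicting
tightness of `Z` itself in `(xₙ)`.
-/

open Function Set Submodule

def Successive (I : ℕ → Finset ℕ) : Prop :=
  ∀ i j : ℕ, i < j → ∀ a ∈ I i, ∀ b ∈ I j, a < b

theorem Successive.pairwise_disjoint {I : ℕ → Finset ℕ} (h : Successive I) :
    Pairwise (Disjoint on I) := by
  intro i j hij
  rw [Function.onFun, Finset.disjoint_left]
  intro a hi hj
  rcases hij.lt_or_gt with hlt | hlt
  · exact lt_irrefl a (h i j hlt a hi a hj)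
  · exact lt_irrefl a (h j i hlt a hj a hi)

theorem finite_setOf_not_disjoint {ι α : Type*} {P : ι → Finset α}
    (hP : Pairwise (Disjoint on P)) (s : Finset α) : {i | ¬Disjoint (P i) s}.Finite := by
  have hsub : ∀ a, {i | a ∈ P i}.Subsingleton := fun a i hi j hj =>
    by_contra fun hij => Finset.disjoint_left.mp (hP hij) hi hj
  refine (s.finite_toSet.biUnion fun a _ => (hsub a).finite).subset fun i hi => ?_
  obtain ⟨a, hai, has⟩ := Finset.not_disjoint_iff.mp hi
  exact mem_biUnion has hai

theorem exists_strictMono_successive (J : ℕ → Finset ℕ) (hJ : ∀ n, {i | n ∈ J i}.Finite) :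
    ∃ ι : ℕ → ℕ, StrictMono ι ∧ Successive (J ∘ ι) := by
  obtain ⟨ι, -, hι⟩ := exists_seq_of_forall_finset_exists (fun _ => True)
    (fun i j => i < j ∧ ∀ a ∈ J i, ∀ b ∈ J j, a < b) fun s _ => by
      obtain ⟨M, hM⟩ := Finset.exists_nat_subset_range (s ∪ s.biUnion J)
      have hbad : (Iio M ∪ ⋃ n ∈ Iio M, {i | n ∈ J i}).Finite :=
        (finite_Iio M).union ((finite_Iio M).biUnion fun n _ => hJ n)
      obtain ⟨j, hj⟩ := hbad.infinite_compl.nonempty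
      have hjM : M ≤ j := not_lt.mp fun h => hj (Or.inl h)
      have hJj : ∀ b ∈ J j, M ≤ b := fun b hb => not_lt.mp fun h => hj (Or.inr (mem_biUnion h hb))
      refine ⟨j, trivial, fun i hi => ⟨?_, fun a ha b hb => ?_⟩⟩
      · exact (Finset.mem_range.mp (hM (Finset.mem_union_left _ hi))).trans_le hjM
      · exact (Finset.mem_range.mp (hM (Finset.mem_union_right _
          (Finset.mem_biUnion.mpr ⟨i, hi, ha⟩)))).trans_le (hJj b hb)
  exact ⟨ι, fun k l hkl => (hι k l hkl).1, fun k l hkl => (hι k l hkl).2⟩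

theorem exists_infinite_compl_biUnion_infinite {I : ℕ → Finset ℕ}
    (hI : Pairwise (Disjoint on I)) :
    ∃ A : Set ℕ, A.Infinite ∧ (⋃ i ∈ A, (I i : Set ℕ))ᶜ.Infinite := by
  set A : Set ℕ := {n | Even n}
  have hA : A.Infinite := Nat.frequently_atTop_iff_infinite.mp Nat.frequently_even
  have hAc : Aᶜ.Infinite := by
    simpa [A, compl_ofPred] using Nat.frequently_atTop_iff_infinite.mp Nat.frequently_odd
  have hdisj : (⋃ i ∈ A, (I i : Set ℕ)) ∩ (⋃ i ∈ Aᶜ, (I i : Set ℕ)) = ∅ := by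
    refine eq_empty_iff_forall_notMem.mpr fun a ⟨ha, ha'⟩ => ?_
    obtain ⟨i, hi, hai⟩ := mem_iUnion₂.mp ha
    obtain ⟨j, hj, haj⟩ := mem_iUnion₂.mp ha'
    exact Finset.disjoint_left.mp (hI fun hij => hj (by rwa [← hij])) hai haj
  have hunion : ((⋃ i ∈ A, (I i : Set ℕ))ᶜ ∪ (⋃ i ∈ Aᶜ, (I i : Set ℕ))ᶜ).Infinite := by
    rw [← compl_inter, hdisj, compl_empty]
    exact infinite_univ
  rcases infinite_union.mp hunion with h | h
  exacts [⟨A, hA, h⟩, ⟨Aᶜ, hAc, h⟩]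

theorem exists_seq_forall_prefix {α : Type*} (P : ∀ n, (Fin n → α) → α → Prop)
    (h : ∀ n prev, ∃ a, P n prev a) : ∃ x : ℕ → α, ∀ n, P n (fun i => x i) (x n) := by
  choose g hg using h
  refine ⟨Nat.strongRec fun n ih => g n fun i => ih i i.2, fun n => ?_⟩
  dsimp only
  rw [Nat.strongRec_eq]
  exact hg _ _

/-- Step `n` of the construction uses the Mazur factor `1 + tol n` and the block approximation
error `tol n / 4`; these keep the basis constant at most `2` and the perturbation below `1 / 2`. -/
def tol (n : ℕ) : ℝ := (1 / 2) ^ n / 4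

theorem tol_pos (n : ℕ) : 0 < tol n := by unfold tol; positivity

theorem hasSum_tol : HasSum tol (1 / 2) := by
  have h := hasSum_geometric_two.div_const (4 : ℝ)
  rwa [show (2 : ℝ) / 4 = 1 / 2 by norm_num] at h

theorem prod_one_add_tol_le_two (s : Finset ℕ) : ∏ j ∈ s, (1 + tol j) ≤ 2 :=
  calc ∏ j ∈ s, (1 + tol j)
      ≤ ∏ j ∈ s, Real.exp (tol j) :=
        Finset.prod_le_prod (fun j _ => by linarith [tol_pos j])
          fun j _ => by linarith [Real.add_one_le_exp (tol j)]
    _ = Real.exp (∑ j ∈ s, tol j) := (Real.exp_sum s tol).symm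
    _ ≤ Real.exp (Real.log 2) := Real.exp_le_exp.mpr <|
        (sum_le_hasSum s (fun j _ => (tol_pos j).le) hasSum_tol).trans
          (by linarith [Real.log_two_gt_d9])
    _ = 2 := Real.exp_log two_pos

section Spans

variable {X : Type*} [NormedAddCommGroup X] [NormedSpace ℝ X]

theorem vecOf_eq_linearCombination (e : ℕ → X) (c : ℕ →₀ ℝ) :
    vecOf e c = Finsupp.linearCombination ℝ e c :=
  (Finsupp.linearCombination_apply _ _).symm

theorem vecOf_mem_spanCompl (e : ℕ → X) {S : Set ℕ} {c : ℕ →₀ ℝ}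
    (hc : ∀ a ∈ c.support, a ∉ S) : vecOf e c ∈ spanCompl e S := by
  rw [vecOf_eq_linearCombination]
  exact le_topologicalClosure _ ((Finsupp.mem_span_image_iff_linearCombination ℝ).mpr
    ⟨c, (Finsupp.mem_supported ℝ c).mpr fun a ha => hc a ha, rfl⟩)

theorem exists_vecOf_near (e : ℕ → X) {S : Set ℕ} {x : X} (hx : x ∈ spanCompl e S) {ε : ℝ}
    (hε : 0 < ε) : ∃ c : ℕ →₀ ℝ, (∀ a ∈ c.support, a ∉ S) ∧ ‖x - vecOf e c‖ < ε := by
  rw [spanCompl, ← SetLike.mem_coe, topologicalClosure_coe] at hx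
  obtain ⟨y, hy, hxy⟩ := Metric.mem_closure_iff.mp hx ε hε
  obtain ⟨c, hc, rfl⟩ := (Finsupp.mem_span_image_iff_linearCombination ℝ).mp hy
  exact ⟨c, fun a ha => (Finsupp.mem_supported ℝ c).mp hc ha,
    by rwa [vecOf_eq_linearCombination, ← dist_eq_norm]⟩

theorem spanCompl_map_le {E F : Type*} [NormedAddCommGroup E] [NormedSpace ℝ E]
    [NormedAddCommGroup F] [NormedSpace ℝ F] (L : E →L[ℝ] F) (x : ℕ → E) (S : Set ℕ)
    {W : Submodule ℝ F} (hW : IsClosed (W : Set F)) (hL : ∀ n ∉ S, L (x n) ∈ W) :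
    (spanCompl x S).map (L : E →ₗ[ℝ] F) ≤ W :=
  map_le_iff_le_comap.mpr <| topologicalClosure_minimal _
    (span_le.mpr <| by rintro _ ⟨n, hn, rfl⟩; exact hL n hn) (hW.preimage L.continuous)

theorem not_finiteDimensional_spanCompl {x : ℕ → X} (hx : LinearIndependent ℝ x) {S : Set ℕ}
    (hS : Sᶜ.Infinite) : ¬FiniteDimensional ℝ (spanCompl x S) := by
  intro _
  have hmem : ∀ n : ↥Sᶜ, x n ∈ spanCompl x S := fun n =>
    le_topologicalClosure _ (subset_span ⟨n, n.2, rfl⟩)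
  have hli : LinearIndependent ℝ fun n : ↥Sᶜ => (⟨x n, hmem n⟩ : spanCompl x S) :=
    LinearIndependent.of_comp (spanCompl x S).subtype (hx.comp _ Subtype.val_injective)
  exact hS (finite_coe_iff.mp hli.finite)

theorem finiteDimensional_quotient_spanCompl {e : ℕ → X}
    (hbasis : (span ℝ (range e)).topologicalClosure = ⊤) {S : Set ℕ} (hS : S.Finite) :
    FiniteDimensional ℝ (X ⧸ spanCompl e S) := by
  set F := span ℝ (e '' S)
  have : FiniteDimensional ℝ F := FiniteDimensional.span_of_finite ℝ (hS.image e)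
  have hsup : spanCompl e S ⊔ F = ⊤ := by
    refine top_unique ?_
    rw [← hbasis]
    refine topologicalClosure_minimal _ (span_le.mpr ?_)
      (isClosed_sup_finiteDimensional _ _ (isClosed_topologicalClosure _))
    rintro _ ⟨n, rfl⟩
    by_cases hn : n ∈ S
    · exact mem_sup_right (subset_span ⟨n, hn, rfl⟩)
    · exact mem_sup_left (le_topologicalClosure _ (subset_span ⟨n, hn, rfl⟩))
  refine Module.Finite.of_surjective ((spanCompl e S).mkQ ∘ₗ F.subtype) fun q => ?_
  obtain ⟨x, rfl⟩ := mkQ_surjective _ q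
  obtain ⟨w, hw, f, hf, rfl⟩ := mem_sup.mp (hsup ▸ mem_top : x ∈ spanCompl e S ⊔ F)
  refine ⟨⟨f, hf⟩, ?_⟩
  simp [(Quotient.mk_eq_zero _).mpr hw]

end Spans

theorem exists_ne_zero_mem_of_finiteDimensional_quotient {K V : Type*} [Field K] [AddCommGroup V]
    [Module K V] (W : Submodule K V) [FiniteDimensional K (V ⧸ W)] (Z : Submodule K V)
    (hZ : ¬FiniteDimensional K Z) {ι : Type*} [Finite ι] (φ : ι → Z →ₗ[K] K) :
    ∃ z : Z, z ≠ 0 ∧ (z : V) ∈ W ∧ ∀ i, φ i z = 0 := by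
  let L : Z →ₗ[K] (V ⧸ W) × (ι → K) := (W.mkQ ∘ₗ Z.subtype).prod (LinearMap.pi φ)
  obtain ⟨z, hz, hz0⟩ : ∃ z ∈ LinearMap.ker L, z ≠ 0 :=
    (Submodule.ne_bot_iff _).mp fun h => hZ (Module.Finite.of_injective L (LinearMap.ker_eq_bot.mp h))
  have hLz : L z = 0 := hz
  exact ⟨z, hz0, (Quotient.mk_eq_zero W).mp (congrArg Prod.fst hLz),
    fun i => congrFun (congrArg Prod.snd hLz) i⟩

section Mazur

variable {E : Type*} [NormedAddCommGroup E] [NormedSpace ℝ E]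

theorem exists_finset_sub_lt_norm_add {K : Set E} (hK : IsCompact K) (hK1 : ∀ u ∈ K, ‖u‖ = 1)
    {ε : ℝ} (hε : 0 < ε) :
    ∃ s : Finset (StrongDual ℝ E), ∀ z, (∀ φ ∈ s, φ z = 0) → ∀ u ∈ K, 1 - ε < ‖u + z‖ := by
  obtain ⟨t, htK, ht, hKt⟩ := Metric.finite_approx_of_totallyBounded hK.totallyBounded ε hε
  choose φ hφ1 hφy using fun y : E => exists_dual_vector'' ℝ y
  refine ⟨ht.toFinset.image φ, fun z hz u hu => ?_⟩
  -- the norming functional of a point `y ∈ t` that is `ε`-close to `u` vanishes on `z`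
  obtain ⟨y, hyt, hyu⟩ := mem_iUnion₂.mp (hKt hu)
  have hle : ∀ w, φ y w ≤ ‖w‖ := fun w => (le_abs_self _).trans <| by
    simpa [Real.norm_eq_abs] using
      ((φ y).le_opNorm w).trans (mul_le_of_le_one_left (norm_nonneg w) (hφ1 y))
  have hzy : φ y z = 0 := hz _ (Finset.mem_image_of_mem φ (ht.mem_toFinset.mpr hyt))
  calc 1 - ε < 1 - ‖y - u‖ := by
        rw [← dist_eq_norm, dist_comm]; linarith [Metric.mem_ball.mp hyu]
    _ ≤ 1 - φ y (y - u) := by linarith [hle (y - u)]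
    _ = φ y (u + z) := by simp [hzy, hφy, hK1 y (htK hyt)]
    _ ≤ ‖u + z‖ := hle _

theorem exists_finset_norm_le_norm_add (F : Submodule ℝ E) [FiniteDimensional ℝ F] {δ : ℝ}
    (hδ : 0 < δ) :
    ∃ s : Finset (StrongDual ℝ E), ∀ z, (∀ φ ∈ s, φ z = 0) → ∀ f ∈ F,
      ‖f‖ ≤ (1 + δ) * ‖f + z‖ := by
  have hK1 : ∀ u ∈ Subtype.val '' Metric.sphere (0 : F) 1, ‖u‖ = 1 := by
    rintro _ ⟨u, hu, rfl⟩
    simpa using hu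
  obtain ⟨s, hs⟩ := exists_finset_sub_lt_norm_add
    ((isCompact_sphere (0 : F) 1).image continuous_subtype_val) hK1 (ε := δ / (1 + δ))
    (by positivity)
  refine ⟨s, fun z hz f hf => ?_⟩
  rcases eq_or_ne f 0 with rfl | hf0
  · simp only [norm_zero, zero_add]
    positivity
  have hfpos : 0 < ‖f‖ := norm_pos_iff.mpr hf0
  have h := hs (‖f‖⁻¹ • z) (fun ψ hψ => by rw [map_smul, hz ψ hψ, smul_zero]) (‖f‖⁻¹ • f)
    ⟨⟨_, F.smul_mem _ hf⟩, by simp [norm_smul, hfpos.ne'], rfl⟩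
  rw [← smul_add, norm_smul, norm_inv, norm_norm] at h
  calc ‖f‖ = (1 + δ) * (1 - δ / (1 + δ)) * ‖f‖ := by field_simp; ring
    _ ≤ (1 + δ) * (‖f‖⁻¹ * ‖f + z‖) * ‖f‖ := by gcongr
    _ = (1 + δ) * ‖f + z‖ := by field_simp

end Mazur

section BasicSequences

variable {E : Type*} [NormedAddCommGroup E] [NormedSpace ℝ E]

/-- Grünblum's condition: for nonzero `u n` it says that `u` is a basic sequence with basis
constant at most `C`. -/
def BasicWithConst (C : ℝ) (u : ℕ → E) : Prop :=
  ∀ m N : ℕ, m ≤ N → ∀ a : ℕ → ℝ,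
    ‖∑ i ∈ Finset.range m, a i • u i‖ ≤ C * ‖∑ i ∈ Finset.range N, a i • u i‖

theorem le_prod_Ico_mul_of_le_one_add_mul {s δ : ℕ → ℝ} (hδ : ∀ n, 0 ≤ δ n)
    (h : ∀ n, s n ≤ (1 + δ n) * s (n + 1)) {m N : ℕ} (hmN : m ≤ N) :
    s m ≤ (∏ j ∈ Finset.Ico m N, (1 + δ j)) * s N := by
  induction N, hmN using Nat.le_induction with
  | base => simp
  | succ N hmN ih =>
    calc s m ≤ (∏ j ∈ Finset.Ico m N, (1 + δ j)) * s N := ih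
      _ ≤ (∏ j ∈ Finset.Ico m N, (1 + δ j)) * ((1 + δ N) * s (N + 1)) :=
          mul_le_mul_of_nonneg_left (h N) (Finset.prod_nonneg fun j _ => by linarith [hδ j])
      _ = (∏ j ∈ Finset.Ico m (N + 1), (1 + δ j)) * s (N + 1) := by
          rw [Finset.prod_Ico_succ_top hmN, mul_assoc]

theorem basicWithConst_of_norm_le_one_add_mul {u : ℕ → E} {δ : ℕ → ℝ} {C : ℝ}
    (hδ : ∀ n, 0 ≤ δ n) (hC : ∀ m N, ∏ j ∈ Finset.Ico m N, (1 + δ j) ≤ C)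
    (hu : ∀ n, ∀ f ∈ span ℝ (range fun i : Fin n => u i), ∀ t : ℝ,
      ‖f‖ ≤ (1 + δ n) * ‖f + t • u n‖) :
    BasicWithConst C u := by
  intro m N hmN a
  have hstep : ∀ n, ‖∑ i ∈ Finset.range n, a i • u i‖ ≤
      (1 + δ n) * ‖∑ i ∈ Finset.range (n + 1), a i • u i‖ := by
    intro n
    rw [Finset.sum_range_succ]
    exact hu n _ (sum_mem fun i hi => smul_mem _ _
      (subset_span ⟨⟨i, Finset.mem_range.mp hi⟩, rfl⟩)) (a n)
  exact (le_prod_Ico_mul_of_le_one_add_mul hδ hstep hmN).trans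
    (mul_le_mul_of_nonneg_right (hC m N) (norm_nonneg _))

variable {C : ℝ} {u : ℕ → E}

theorem BasicWithConst.abs_apply_le (h : BasicWithConst C u) (hu : ∀ n, ‖u n‖ = 1)
    (l : ℕ →₀ ℝ) (j : ℕ) : |l j| ≤ 2 * C * ‖Finsupp.linearCombination ℝ u l‖ := by
  obtain ⟨N, hN⟩ := Finset.exists_nat_subset_range (insert j l.support)
  have hjN : j + 1 ≤ N := Finset.mem_range.mp (hN (Finset.mem_insert_self _ _))
  have hl : Finsupp.linearCombination ℝ u l = ∑ i ∈ Finset.range N, l i • u i := by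
    rw [Finsupp.linearCombination_apply]
    exact Finsupp.sum_of_support_subset l ((Finset.subset_insert _ _).trans hN) _
      fun _ _ => zero_smul ℝ _
  calc |l j| = ‖∑ i ∈ Finset.range (j + 1), l i • u i - ∑ i ∈ Finset.range j, l i • u i‖ := by
        rw [Finset.sum_range_succ, add_sub_cancel_left, norm_smul, hu, mul_one, Real.norm_eq_abs]
    _ ≤ ‖∑ i ∈ Finset.range (j + 1), l i • u i‖ + ‖∑ i ∈ Finset.range j, l i • u i‖ :=
        norm_sub_le _ _
    _ ≤ C * ‖∑ i ∈ Finset.range N, l i • u i‖ + C * ‖∑ i ∈ Finset.range N, l i • u i‖ :=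
        add_le_add (h _ _ hjN l) (h _ _ (by omega) l)
    _ = 2 * C * ‖Finsupp.linearCombination ℝ u l‖ := by rw [hl]; ring

theorem BasicWithConst.linearIndependent (h : BasicWithConst C u) (hu : ∀ n, ‖u n‖ = 1) :
    LinearIndependent ℝ u :=
  linearIndependent_iff.mpr fun l hl => Finsupp.ext fun j =>
    abs_nonpos_iff.mp (by simpa [hl] using h.abs_apply_le hu l j)

theorem BasicWithConst.exists_biorthogonal (h : BasicWithConst C u) (hu : ∀ n, ‖u n‖ = 1) :
    ∃ φ : ℕ → StrongDual ℝ E, (∀ j, ‖φ j‖ ≤ 2 * C) ∧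
      ∀ i j, φ j (u i) = if i = j then 1 else 0 := by
  have hli := h.linearIndependent hu
  have hC : 0 ≤ 2 * C := by
    have := h.abs_apply_le hu (Finsupp.single 0 1) 0
    rw [Finsupp.linearCombination_single, one_smul, hu, mul_one, Finsupp.single_eq_same,
      abs_one] at this
    linarith
  have hcoord : ∀ j, ∀ v : span ℝ (range u),
      ‖(Finsupp.lapply j ∘ₗ hli.repr) v‖ ≤ 2 * C * ‖v‖ := fun j v => by
    simpa [hli.linearCombination_repr] using h.abs_apply_le hu (hli.repr v) j
  choose φ hφ hφnorm using fun j =>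
    exists_extension_norm_eq _ ((Finsupp.lapply j ∘ₗ hli.repr).mkContinuous _ (hcoord j))
  refine ⟨φ, fun j => (hφnorm j).trans_le (LinearMap.mkContinuous_norm_le _ hC _),
    fun i j => ?_⟩
  rw [hφ j ⟨u i, subset_span ⟨i, rfl⟩⟩]
  simp [hli.repr_eq_single i ⟨u i, subset_span ⟨i, rfl⟩⟩ rfl, Finsupp.single_apply]

end BasicSequences

theorem exists_clm_apply_eq_of_biorthogonal {E F : Type*} [NormedAddCommGroup E]
    [NormedSpace ℝ E] [NormedAddCommGroup F] [NormedSpace ℝ F] [CompleteSpace F] (u : ℕ → E)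
    (φ : ℕ → StrongDual ℝ E) (hφ : ∀ i j, φ j (u i) = if i = j then 1 else 0) (d : ℕ → F)
    (hd : Summable fun n => ‖φ n‖ * ‖d n‖) :
    ∃ D : E →L[ℝ] F, (∀ i, D (u i) = d i) ∧ ‖D‖ ≤ ∑' n, ‖φ n‖ * ‖d n‖ := by
  have hnorm : ∀ n, ‖(φ n).smulRight (d n)‖ = ‖φ n‖ * ‖d n‖ := fun n =>
    ContinuousLinearMap.norm_smulRight_apply _ _
  have hsum : Summable fun n => (φ n).smulRight (d n) :=
    Summable.of_norm_bounded hd fun n => (hnorm n).le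
  refine ⟨∑' n, (φ n).smulRight (d n), fun i => ?_, ?_⟩
  · have := (ContinuousLinearMap.apply ℝ F (u i)).map_tsum hsum
    simp only [ContinuousLinearMap.apply_apply, ContinuousLinearMap.smulRight_apply, hφ,
      ite_smul, one_smul, zero_smul, eq_comm (a := i)] at this
    rw [this, tsum_ite_eq]
  · exact (norm_tsum_le_tsum_norm (hd.congr fun n => (hnorm n).symm)).trans_eq
      (tsum_congr hnorm)

theorem Embeds.of_map_le {Y E F : Type*} [NormedAddCommGroup Y] [NormedSpace ℝ Y]
    [NormedAddCommGroup E] [NormedSpace ℝ E] [NormedAddCommGroup F] [NormedSpace ℝ F]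
    {W : Submodule ℝ E} {W' : Submodule ℝ F} (h : Embeds Y W) (L : E →L[ℝ] F) {κ : ℝ}
    (hκ : 0 < κ) (hL : ∀ y, κ * ‖y‖ ≤ ‖L y‖) (hW : W.map (L : E →ₗ[ℝ] F) ≤ W') : Embeds Y W' := by
  obtain ⟨T, c, hc, hT⟩ := h
  refine ⟨(L ∘L W.subtypeL ∘L T).codRestrict W' fun y => hW ⟨T y, (T y).2, rfl⟩, κ * c,
    mul_pos hκ hc, fun y => ?_⟩
  calc κ * c * ‖y‖ = κ * (c * ‖y‖) := mul_assoc _ _ _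
    _ ≤ κ * ‖T y‖ := mul_le_mul_of_nonneg_left (hT y) hκ.le
    _ ≤ ‖L (T y)‖ := hL _

section Tightness

variable {X : Type*} [NormedAddCommGroup X] [NormedSpace ℝ X]

theorem TightBasis.of_embedding_blocks {e : ℕ → X} (he : TightBasis e) {E : Type*}
    [NormedAddCommGroup E] [NormedSpace ℝ E] (x : ℕ → E) (c : ℕ → ℕ →₀ ℝ)
    (hc : Successive fun n => (c n).support) (T : E →L[ℝ] X) {κ : ℝ} (hκ : 0 < κ)
    (hT : ∀ y, κ * ‖y‖ ≤ ‖T y‖) (hTx : ∀ n, T (x n) = vecOf e (c n)) : TightBasis x := by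
  intro Y _ _ _ hY
  obtain ⟨I, hI, hIe⟩ := he Y hY
  have hJ : ∀ i, {n | ¬Disjoint (c n).support (I i)}.Finite := fun i =>
    finite_setOf_not_disjoint hc.pairwise_disjoint (I i)
  obtain ⟨ι, hι, hJι⟩ := exists_strictMono_successive (fun i => (hJ i).toFinset) fun n => by
    simpa only [Finite.mem_toFinset, mem_ofPred_eq, disjoint_comm] using
      finite_setOf_not_disjoint (Successive.pairwise_disjoint hI) (c n).support
  refine ⟨fun k => (hJ (ι k)).toFinset, hJι, fun A hA hYA => hIe (ι '' A)
    (hA.image hι.injective.injOn) (Embeds.of_map_le hYA T hκ hT (spanCompl_map_le T x _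
      (isClosed_topologicalClosure _) fun n hn => ?_))⟩
  rw [hTx]
  refine vecOf_mem_spanCompl e fun a ha haS => hn ?_
  obtain ⟨_, ⟨k, hk, rfl⟩, haI⟩ := mem_iUnion₂.mp haS
  exact mem_iUnion₂.mpr ⟨k, hk, (hJ _).mem_toFinset.mpr (Finset.not_disjoint_iff.mpr ⟨a, ha, haI⟩)⟩

theorem TightBasis.not_forall_embeds {E : Type} [NormedAddCommGroup E] [NormedSpace ℝ E]
    [CompleteSpace E] (hE : ¬FiniteDimensional ℝ E) {x : ℕ → E} (ht : TightBasis x)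
    (hx : LinearIndependent ℝ x) :
    ¬∀ W : Submodule ℝ E, IsClosed (W : Set E) → ¬FiniteDimensional ℝ W → Embeds E W := by
  intro hmin
  obtain ⟨I, hI, hIx⟩ := ht E hE
  obtain ⟨A, hA, hAc⟩ := exists_infinite_compl_biUnion_infinite (Successive.pairwise_disjoint hI)
  exact hIx A hA (hmin _ (isClosed_topologicalClosure _) (not_finiteDimensional_spanCompl hx hAc))

theorem exists_norm_eq_one_mem_spanCompl_norm_le {e : ℕ → X}
    (hbasis : (span ℝ (range e)).topologicalClosure = ⊤) {Z : Submodule ℝ X}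
    (hZ : ¬FiniteDimensional ℝ Z) (F : Submodule ℝ Z) [FiniteDimensional ℝ F] {δ : ℝ}
    (hδ : 0 < δ) {S : Set ℕ} (hS : S.Finite) :
    ∃ z : Z, ‖z‖ = 1 ∧ (z : X) ∈ spanCompl e S ∧
      ∀ f ∈ F, ∀ t : ℝ, ‖f‖ ≤ (1 + δ) * ‖f + t • z‖ := by
  obtain ⟨s, hs⟩ := exists_finset_norm_le_norm_add F hδ
  have := finiteDimensional_quotient_spanCompl hbasis hS
  obtain ⟨z, hz0, hzS, hzs⟩ := exists_ne_zero_mem_of_finiteDimensional_quotient (spanCompl e S) Z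
    hZ fun φ : s => (φ : StrongDual ℝ Z).toLinearMap
  refine ⟨‖z‖⁻¹ • z, norm_smul_inv_norm hz0, (spanCompl e S).smul_mem _ hzS,
    fun f hf t => hs _ (fun φ hφ => ?_) f hf⟩
  simp [show φ z = 0 from hzs ⟨φ, hφ⟩]

theorem exists_seq_norm_le_one_add_tol {e : ℕ → X}
    (hbasis : (span ℝ (range e)).topologicalClosure = ⊤) {Z : Submodule ℝ X}
    (hZ : ¬FiniteDimensional ℝ Z) :
    ∃ (x : ℕ → Z) (c : ℕ → ℕ →₀ ℝ), (∀ n, ‖x n‖ = 1) ∧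
      (∀ n, ∀ f ∈ span ℝ (range fun i : Fin n => x i), ∀ t : ℝ,
        ‖f‖ ≤ (1 + tol n) * ‖f + t • x n‖) ∧
      (∀ n, ‖(x n : X) - vecOf e (c n)‖ < tol n / 4) ∧ Successive fun n => (c n).support := by
  obtain ⟨w, hw⟩ := exists_seq_forall_prefix (α := Z × (ℕ →₀ ℝ))
    (fun n prev p => ‖p.1‖ = 1 ∧
      (∀ f ∈ span ℝ (range fun i => (prev i).1), ∀ t : ℝ, ‖f‖ ≤ (1 + tol n) * ‖f + t • p.1‖) ∧
      ‖(p.1 : X) - vecOf e p.2‖ < tol n / 4 ∧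
      ∀ i, ∀ a ∈ (prev i).2.support, ∀ b ∈ p.2.support, a < b) fun n prev => by
    obtain ⟨M, hM⟩ := Finset.exists_nat_subset_range (Finset.univ.biUnion fun i => (prev i).2.support)
    have : FiniteDimensional ℝ (span ℝ (range fun i => (prev i).1)) :=
      FiniteDimensional.span_of_finite ℝ (finite_range _)
    obtain ⟨z, hz1, hzS, hzF⟩ := exists_norm_eq_one_mem_spanCompl_norm_le hbasis hZ
      (span ℝ (range fun i => (prev i).1)) (tol_pos n) (finite_Iio M)
    obtain ⟨c, hc, hzc⟩ := exists_vecOf_near e hzS (by linarith [tol_pos n] : 0 < tol n / 4)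
    exact ⟨(z, c), hz1, hzF, hzc, fun i a ha b hb => (Finset.mem_range.mp
      (hM (Finset.mem_biUnion.mpr ⟨i, Finset.mem_univ _, ha⟩))).trans_le (not_lt.mp (hc b hb))⟩
  exact ⟨fun n => (w n).1, fun n => (w n).2, fun n => (hw n).1, fun n => (hw n).2.1,
    fun n => (hw n).2.2.1, fun m n hmn => (hw n).2.2.2 ⟨m, hmn⟩⟩

theorem exists_tightBasis_basicWithConst_two [CompleteSpace X] {e : ℕ → X}
    (hbasis : (span ℝ (range e)).topologicalClosure = ⊤) (he : TightBasis e)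
    {Z : Submodule ℝ X} (hZ : ¬FiniteDimensional ℝ Z) :
    ∃ x : ℕ → Z, BasicWithConst 2 x ∧ (∀ n, ‖x n‖ = 1) ∧ TightBasis x := by
  obtain ⟨x, c, hx1, hxδ, hxc, hc⟩ := exists_seq_norm_le_one_add_tol hbasis hZ
  have hbasic : BasicWithConst 2 x := basicWithConst_of_norm_le_one_add_mul
    (fun n => (tol_pos n).le) (fun _ _ => prod_one_add_tol_le_two _) hxδ
  obtain ⟨φ, hφ4, hφ⟩ := hbasic.exists_biorthogonal hx1
  set d : ℕ → X := fun n => (x n : X) - vecOf e (c n)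
  have hd : ∀ n, ‖φ n‖ * ‖d n‖ ≤ tol n := fun n =>
    calc ‖φ n‖ * ‖d n‖ ≤ (2 * 2) * (tol n / 4) :=
          mul_le_mul (hφ4 n) (hxc n).le (norm_nonneg _) (by norm_num)
      _ = tol n := by ring
  have hsum := hasSum_tol.summable.of_nonneg_of_le (fun n => by positivity) hd
  obtain ⟨D, hDx, hD⟩ := exists_clm_apply_eq_of_biorthogonal x φ hφ d hsum
  have hD2 : ‖D‖ ≤ 1 / 2 :=
    hD.trans ((Summable.tsum_le_tsum hd hsum hasSum_tol.summable).trans_eq hasSum_tol.tsum_eq)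
  refine ⟨x, hbasic, hx1, he.of_embedding_blocks x c hc (Z.subtypeL - D)
    (by norm_num : (0 : ℝ) < 1 / 2) (fun y => ?_) fun n => ?_⟩
  · calc 1 / 2 * ‖y‖ ≤ ‖y‖ - ‖D‖ * ‖y‖ := by nlinarith [norm_nonneg y]
      _ ≤ ‖(y : X)‖ - ‖D y‖ := sub_le_sub le_rfl (D.le_opNorm y)
      _ ≤ ‖(Z.subtypeL - D) y‖ := norm_sub_norm_le _ _
  · simp [d, hDx]

end Tightness

/-- tightness is hereditary: every infinite-dimensional closed subspace of a
space with a tight basis contains a tight basic sequence; in particular the space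
contains no minimal subspace. -/
theorem stmt4 {X : Type} [NormedAddCommGroup X] [NormedSpace ℝ X] [CompleteSpace X]
    (e : ℕ → X)
    (hbasis : (Submodule.span ℝ (Set.range e)).topologicalClosure = ⊤)
    (htight : TightBasis e) :
    (∀ Z : Submodule ℝ X, IsClosed (Z : Set X) → ¬ FiniteDimensional ℝ Z →
      ∃ x : ℕ → Z,
        (∃ C : ℝ, 1 ≤ C ∧ ∀ (m N : ℕ), m ≤ N → ∀ a : ℕ → ℝ,
          ‖∑ i ∈ Finset.range m, a i • x i‖ ≤ C * ‖∑ i ∈ Finset.range N, a i • x i‖) ∧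
        (∀ i, x i ≠ 0) ∧ TightBasis x) ∧
    (∀ Z : Submodule ℝ X, IsClosed (Z : Set X) → ¬ FiniteDimensional ℝ Z →
      ¬ ∀ W : Submodule ℝ Z, IsClosed (W : Set Z) → ¬ FiniteDimensional ℝ W →
        Embeds ↥Z ↥W) := by
  refine ⟨fun Z _ hZ => ?_, fun Z hZc hZ => ?_⟩
  · obtain ⟨x, hbasic, hx1, hxt⟩ := exists_tightBasis_basicWithConst_two hbasis htight hZ
    exact ⟨x, ⟨2, one_le_two, hbasic⟩, fun i => norm_ne_zero_iff.mp (by simp [hx1]), hxt⟩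
  · have : CompleteSpace Z := hZc.isComplete.completeSpace_coe
    obtain ⟨x, hbasic, hx1, hxt⟩ := exists_tightBasis_basicWithConst_two hbasis htight hZ
    exact hxt.not_forall_embeds hZ (hbasic.linearIndependent hx1)
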